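/- Let N ≥ 2 and let L ⊆ ℝ^N be a linear subspace with dim L ∉ {0, N}. Then the map Π : 𝒞(ℝ^N) → 𝒦(L), X ↦ p_L(X), is a continuous surjection; in particular, every non-empty compact subset of L is the orthogonal projection of some Cantor set in ℝ^N. -/

import Mathlib

noncomputable def proj {N : ℕ} (L : Submodule ℝ (EuclideanSpace ℝ (Fin N))) :
    EuclideanSpace ℝ (Fin N) → EuclideanSpace ℝ (Fin N) :=
  fun x => (Submodule.orthogonalProjectionOnto L x : EuclideanSpace ℝ (Fin N))

/-- A Cantor set in ℝ^N: a non-empty compact perfect totally disconnected subset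
(equivalently, a subset homeomorphic to the middle-thirds Cantor set). -/
def IsCantorSet {N : ℕ} (A : Set (EuclideanSpace ℝ (Fin N))) : Prop :=
  A.Nonempty ∧ IsCompact A ∧ Perfect A ∧ IsTotallyDisconnected A

/-- The space `𝒞(ℝ^N)` of Cantor sets in ℝ^N, topologized via the Hausdorff metric
(as a subspace of the space of non-empty compact subsets). -/
abbrev CantorSets (N : ℕ) :=
  {K : TopologicalSpace.NonemptyCompacts (EuclideanSpace ℝ (Fin N)) //
    IsCantorSet (K : Set (EuclideanSpace ℝ (Fin N)))}

open Cardinal Set Metric Filter Function Topology EMetric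

lemma cantorFunction_continuous {c : ℝ} (h1 : 0 ≤ c) (h2 : c < 1) :
    Continuous (cantorFunction c) := by
  apply continuous_tsum (u := fun n => c ^ n)
  · intro n
    exact (continuous_of_discreteTopology
      (f := fun b : Bool => (cond b (c ^ n) 0 : ℝ))).comp (continuous_apply n)
  · exact summable_geometric_of_lt_one h1 h2
  · intro n x
    rw [Real.norm_eq_abs, abs_le]
    constructor
    · exact le_trans (by simp [neg_nonpos, pow_nonneg h1]) (cantorFunctionAux_nonneg h1)
    · cases h : x n <;> simp [cantorFunctionAux, h, pow_nonneg h1]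

lemma cantorFunction_nonneg {c : ℝ} (h1 : 0 ≤ c) (x : ℕ → Bool) :
    0 ≤ cantorFunction c x :=
  tsum_nonneg fun _ => cantorFunctionAux_nonneg h1

noncomputable def cantorRem (y : ℝ) : ℕ → ℝ
  | 0 => y
  | (n+1) => if (1/2:ℝ)^n ≤ cantorRem y n then cantorRem y n - (1/2)^n else cantorRem y n

lemma cantorFunction_half_surjOn :
    ∀ y : ℝ, 0 ≤ y → y ≤ 2 → ∃ x : ℕ → Bool, cantorFunction (1/2) x = y := by
  intro y hy0 hy2
  classical
  set r : ℕ → ℝ := cantorRem y with hr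
  have hr0 : r 0 = y := rfl
  have hrsucc : ∀ n, r (n+1) = if (1/2 : ℝ)^n ≤ r n then r n - (1/2)^n else r n :=
    fun n => rfl
  set x : ℕ → Bool := fun n => decide ((1/2 : ℝ)^n ≤ r n) with hx
  have hbound : ∀ n, 0 ≤ r n ∧ r n ≤ 2 * (1/2)^n := by
    intro n
    induction n with
    | zero => simpa [hr0] using ⟨hy0, by linarith⟩
    | succ n ih =>
      rw [hrsucc]
      by_cases h : (1/2 : ℝ)^n ≤ r n
      · rw [if_pos h]
        constructor
        · linarith
        · rw [pow_succ]; linarith [ih.2]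
      · rw [if_neg h]
        push_neg at h
        constructor
        · exact ih.1
        · rw [pow_succ]; linarith
  have haux : ∀ n, cantorFunctionAux (1/2) x n = r n - r (n+1) := by
    intro n
    rw [hrsucc]
    by_cases h : (1/2 : ℝ)^n ≤ r n
    · rw [if_pos h, cantorFunctionAux_true (by simp only [hx, decide_eq_true_eq]; exact h)]; ring
    · rw [if_neg h, cantorFunctionAux_false (by simp only [hx, decide_eq_false_iff_not]; exact h)]; ring
  have hsum : ∀ n, ∑ k ∈ Finset.range n, cantorFunctionAux (1/2) x k = y - r n := by
    intro n
    simp only [haux]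
    rw [Finset.sum_range_sub']
    rw [hr0]
  have hrlim : Tendsto r atTop (nhds 0) := by
    apply squeeze_zero (fun n => (hbound n).1) (fun n => (hbound n).2)
    have := tendsto_pow_atTop_nhds_zero_of_lt_one (by norm_num : (0:ℝ) ≤ 1/2) (by norm_num)
    simpa using this.const_mul 2
  have h1 : Tendsto (fun n => ∑ k ∈ Finset.range n, cantorFunctionAux (1/2) x k)
      atTop (nhds y) := by
    simp only [hsum]
    simpa using tendsto_const_nhds.sub hrlim
  have h2 := (summable_cantor_function (c := 1/2) x (by norm_num) (by norm_num)).hasSum.tendsto_sum_nat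
  exact ⟨x, tendsto_nhds_unique h2 h1⟩

lemma coord_le_norm {N : ℕ} (x : EuclideanSpace ℝ (Fin N)) (i : Fin N) : |x i| ≤ ‖x‖ := by
  rw [EuclideanSpace.norm_eq, ← Real.sqrt_sq_eq_abs]
  simp only [Real.norm_eq_abs, sq_abs]
  apply Real.sqrt_le_sqrt
  exact Finset.single_le_sum (f := fun j => x j ^ 2) (fun j _ => sq_nonneg _) (Finset.mem_univ i)

/-- Hausdorff–Alexandroff: every nonempty compact subset of ℝ^N (N ≥ 1) is a continuous
image of the Cantor space. -/
lemma exists_cantor_surjection {N : ℕ} [NeZero N] {K : Set (EuclideanSpace ℝ (Fin N))}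
    (hK : IsCompact K) (hne : K.Nonempty) :
    ∃ f : (ℕ → Bool) → EuclideanSpace ℝ (Fin N), Continuous f ∧ range f = K := by
  classical
  haveI : Nonempty (Fin N) := ⟨⟨0, Nat.pos_of_ne_zero (NeZero.ne N)⟩⟩
  haveI : Infinite (Fin N × ℕ) := by infer_instance
  haveI : Denumerable (Fin N × ℕ) := Denumerable.ofEncodableOfInfinite _
  let ε : Fin N × ℕ ≃ ℕ := Denumerable.eqv (Fin N × ℕ)
  obtain ⟨M0, hM0⟩ : ∃ M0, ∀ k ∈ K, ‖k‖ ≤ M0 :=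
    hK.exists_bound_of_continuousOn continuousOn_id
  set M : ℝ := max M0 1 with hM
  have hMpos : 0 < M := lt_of_lt_of_le one_pos (le_max_right _ _)
  have hKM : ∀ k ∈ K, ∀ i, |k i| ≤ M :=
    fun k hk i => (coord_le_norm k i).trans ((hM0 k hk).trans (le_max_left _ _))
  set σ : (ℕ → Bool) → ℝ := cantorFunction (1/2) with hσ
  set Φ : (ℕ → Bool) → EuclideanSpace ℝ (Fin N) :=
    fun x => (EuclideanSpace.equiv (Fin N) ℝ).symm (fun i => M * σ (fun n => x (ε (i, n))) - M)
    with hΦ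
  have hΦcont : Continuous Φ := by
    refine Continuous.comp (EuclideanSpace.equiv (Fin N) ℝ).symm.continuous ?_
    refine continuous_pi fun i => Continuous.sub ?_ continuous_const
    refine continuous_const.mul ?_
    exact (cantorFunction_continuous (by norm_num) (by norm_num)).comp
      (continuous_pi fun n => continuous_apply _)
  have hKrange : K ⊆ range Φ := by
    intro k hk
    have hdig : ∀ i : Fin N, ∃ d : ℕ → Bool, σ d = (k i + M) / M := by
      intro i
      apply cantorFunction_half_surjOn
      · have h := (abs_le.1 (hKM k hk i)).1
        have : 0 ≤ k i + M := by linarith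
        positivity
      · rw [div_le_iff₀ hMpos]
        have := (abs_le.1 (hKM k hk i)).2
        linarith
    choose d hd using hdig
    refine ⟨fun m => d (ε.symm m).1 (ε.symm m).2, ?_⟩
    rw [hΦ]
    apply ((EuclideanSpace.equiv (Fin N) ℝ).symm_apply_eq).2
    funext i
    have h2 : (fun n => (fun m => d (ε.symm m).1 (ε.symm m).2) (ε (i, n))) = d i := by
      funext n; simp only [Equiv.symm_apply_apply]
    simp only [h2, hd]
    field_simp
    rw [add_sub_cancel_right]; rfl
  -- retraction onto the preimage of K
  set S : Set (ℕ → Bool) := Φ ⁻¹' K with hS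
  have hScl : IsClosed S := hK.isClosed.preimage hΦcont
  have hSne : S.Nonempty := by
    obtain ⟨k, hk⟩ := hne
    obtain ⟨x, hx⟩ := hKrange hk
    exact ⟨x, by simp [hS, hx, hk]⟩
  obtain ⟨r, hr_fix, hr_surj, hr_cont⟩ :=
    PiNat.exists_retraction_subtype_of_isClosed (E := fun _ => Bool) hScl hSne
  refine ⟨fun x => Φ (r x).1, hΦcont.comp (continuous_subtype_val.comp hr_cont), ?_⟩
  apply subset_antisymm
  · rintro _ ⟨x, rfl⟩
    exact (r x).2
  · intro k hk
    obtain ⟨x, hx⟩ := hKrange hk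
    have hxS : x ∈ S := by simp [hS, hx, hk]
    refine ⟨x, ?_⟩
    have h3 := hr_fix ⟨x, hxS⟩
    show Φ (r x).1 = k
    rw [show r x = ⟨x, hxS⟩ from h3, hx]

lemma exists_cantorSet_proj {N : ℕ} (hN : 2 ≤ N) (L : Submodule ℝ (EuclideanSpace ℝ (Fin N)))
    (htop : L ≠ ⊤) (K : Set (EuclideanSpace ℝ (Fin N)))
    (hKL : K ⊆ (L : Set (EuclideanSpace ℝ (Fin N)))) (hK : IsCompact K) (hne : K.Nonempty) :
    ∃ X : Set (EuclideanSpace ℝ (Fin N)), IsCantorSet X ∧ proj L '' X = K := by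
  haveI : NeZero N := ⟨by omega⟩
  obtain ⟨f, hfc, hfr⟩ := exists_cantor_surjection hK hne
  have hfK : ∀ x, f x ∈ K := fun x => hfr ▸ mem_range_self x
  -- a nonzero vector orthogonal to L
  obtain ⟨v, hvL, hv0⟩ : ∃ v, v ∈ Lᗮ ∧ v ≠ 0 := by
    apply Submodule.exists_mem_ne_zero_of_ne_bot
    rw [Ne, Submodule.orthogonal_eq_bot_iff]
    exact htop
  set e : (ℕ → Bool) → ℝ := cantorFunction (1/3) with he
  have hec : Continuous e := cantorFunction_continuous (by norm_num) (by norm_num)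
  have hei : Injective e := cantorFunction_injective (by norm_num) (by norm_num)
  set F : (ℕ → Bool) → EuclideanSpace ℝ (Fin N) := fun x => f x + e x • v with hF
  have hFc : Continuous F := hfc.add (hec.smul continuous_const)
  -- projection of F
  have hprojF : ∀ x, proj L (F x) = f x := by
    intro x
    have h1 : ((Submodule.orthogonalProjectionOnto L (f x) : ↥L) : EuclideanSpace ℝ (Fin N)) = f x :=
      Submodule.starProjection_eq_self_iff.2 (hKL (hfK x))
    have h2 : Submodule.orthogonalProjectionOnto L v = 0 :=
      Submodule.orthogonalProjectionOnto_apply_of_mem_orthogonal hvL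
    simp only [proj, hF, map_add, map_smul, h2, smul_zero, add_zero,
      Submodule.coe_add, Submodule.coe_smul, h1]
  -- injectivity via inner product with v
  have hinner : ∀ x, (inner ℝ (F x) v : ℝ) = e x * ‖v‖ ^ 2 := by
    intro x
    show (inner ℝ (f x + e x • v) v : ℝ) = e x * ‖v‖ ^ 2
    rw [inner_add_left, real_inner_smul_left, real_inner_self_eq_norm_sq,
      Submodule.inner_right_of_mem_orthogonal (hKL (hfK x)) hvL, zero_add]
  have hFi : Injective F := by
    intro x y hxy
    have h := (hinner x).symm.trans ((congrArg (fun z => (inner ℝ z v : ℝ)) hxy).trans (hinner y))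
    have hv2 : ‖v‖ ^ 2 ≠ 0 := pow_ne_zero _ (norm_ne_zero_iff.2 hv0)
    exact hei (mul_right_cancel₀ hv2 h)
  have hemb : IsEmbedding F := hFc.isClosedEmbedding hFi |>.isEmbedding
  refine ⟨range F, ⟨range_nonempty F, isCompact_range hFc, ?_, ?_⟩, ?_⟩
  · -- Perfect
    constructor
    · exact (isCompact_range hFc).isClosed
    · intro z hz
      obtain ⟨a, rfl⟩ := hz
      rw [accPt_iff_nhds]
      intro U hU
      -- approximating sequence
      set b : ℕ → (ℕ → Bool) := fun k => Function.update a k (!(a k)) with hb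
      have hbk : ∀ k, b k ≠ a := by
        intro k h
        have := congrFun h k
        simp [hb, Function.update_self] at this
      have hblim : Tendsto b atTop (nhds a) := by
        rw [tendsto_pi_nhds]
        intro m
        apply tendsto_const_nhds.congr'
        filter_upwards [Filter.eventually_gt_atTop m] with k hk
        simp [hb, Function.update_of_ne (by omega : m ≠ k)]
      have hFlim : Tendsto (F ∘ b) atTop (nhds (F a)) := (hFc.tendsto a).comp hblim
      have : ∀ᶠ k in atTop, F (b k) ∈ U := hFlim.eventually_mem hU
      obtain ⟨k, hk⟩ := this.exists
      exact ⟨F (b k), ⟨hk, mem_range_self _⟩, fun h => hbk k (hFi h)⟩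
  · -- totally disconnected
    rw [hemb.isTotallyDisconnected_range]
    infer_instance
  · -- image
    rw [← hfr]
    ext z
    constructor
    · rintro ⟨_, ⟨x, rfl⟩, rfl⟩
      exact ⟨x, (hprojF x).symm⟩
    · rintro ⟨x, rfl⟩
      exact ⟨F x, mem_range_self x, hprojF x⟩

lemma infEdist_image_le {α β : Type*} [PseudoEMetricSpace α] [PseudoEMetricSpace β] {f : α → β}
    (hf : LipschitzWith 1 f) (x : α) (t : Set α) :
    infEdist (f x) (f '' t) ≤ infEdist x t := by
  have h : infEdist x t = ⨅ y ∈ t, edist x y := rfl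
  rw [h]
  refine le_iInf₂ fun y hy => ?_
  calc infEdist (f x) (f '' t) ≤ edist (f x) (f y) :=
        infEdist_le_edist_of_mem (mem_image_of_mem f hy)
    _ ≤ edist x y := by simpa using hf x y

lemma hausdorffEdist_image_le {α β : Type*} [PseudoEMetricSpace α] [PseudoEMetricSpace β]
    {f : α → β} (hf : LipschitzWith 1 f) (s t : Set α) :
    hausdorffEdist (f '' s) (f '' t) ≤ hausdorffEdist s t := by
  apply hausdorffEdist_le_of_infEdist
  · rintro _ ⟨x, hx, rfl⟩
    exact (infEdist_image_le hf x t).trans (infEdist_le_hausdorffEdist_of_mem hx)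
  · rintro _ ⟨x, hx, rfl⟩
    rw [show hausdorffEdist s t = hausdorffEDist t s from hausdorffEDist_comm]
    exact (infEdist_image_le hf x s).trans (infEdist_le_hausdorffEdist_of_mem hx)

theorem stmt_17 (N : ℕ) (hN : 2 ≤ N) (L : Submodule ℝ (EuclideanSpace ℝ (Fin N)))
    (hbot : L ≠ ⊥) (htop : L ≠ ⊤) :
    ∃ Pi : CantorSets N → TopologicalSpace.NonemptyCompacts ↥L,
      (∀ X, ((Pi X : TopologicalSpace.NonemptyCompacts ↥L) : Set ↥L) =
        (fun x => Submodule.orthogonalProjectionOnto L x) '' (X.1 : Set (EuclideanSpace ℝ (Fin N)))) ∧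
      Continuous Pi ∧ Function.Surjective Pi ∧
      ∀ K : Set (EuclideanSpace ℝ (Fin N)), K ⊆ (L : Set (EuclideanSpace ℝ (Fin N))) →
        IsCompact K → K.Nonempty →
          ∃ X : Set (EuclideanSpace ℝ (Fin N)), IsCantorSet X ∧ proj L '' X = K := by
  set E := EuclideanSpace ℝ (Fin N)
  set g : E → ↥L := fun x => Submodule.orthogonalProjectionOnto L x with hg
  have hgl : LipschitzWith 1 g := by
    have h1 : ‖(Submodule.orthogonalProjectionOnto L : E →L[ℝ] ↥L)‖₊ ≤ 1 := by
      rw [← NNReal.coe_le_coe]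
      exact_mod_cast Submodule.orthogonalProjectionOnto_norm_le L
    exact ((Submodule.orthogonalProjectionOnto L : E →L[ℝ] ↥L).lipschitz.weaken h1)
  set Pi' : TopologicalSpace.NonemptyCompacts E → TopologicalSpace.NonemptyCompacts ↥L :=
    fun A => ⟨⟨g '' A, A.isCompact.image hgl.continuous⟩, A.nonempty.image g⟩ with hPi'
  have hPi'l : LipschitzWith 1 Pi' := by
    apply LipschitzWith.of_edist_le
    intro A B
    exact hausdorffEdist_image_le hgl (A : Set E) (B : Set E)
  refine ⟨fun X => Pi' X.1, fun X => rfl, hPi'l.continuous.comp continuous_subtype_val, ?_, ?_⟩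
  · -- surjectivity
    intro Ko
    set K : Set E := Subtype.val '' (Ko : Set ↥L) with hK
    have hKL : K ⊆ (L : Set E) := by rintro _ ⟨y, _, rfl⟩; exact y.2
    have hKc : IsCompact K := Ko.isCompact.image continuous_subtype_val
    have hKne : K.Nonempty := Ko.nonempty.image _
    obtain ⟨X, hX, hXproj⟩ := exists_cantorSet_proj hN L htop K hKL hKc hKne
    refine ⟨⟨⟨⟨X, hX.2.1⟩, hX.1⟩, hX⟩, ?_⟩
    apply TopologicalSpace.NonemptyCompacts.ext
    show g '' X = (Ko : Set ↥L)
    apply Subtype.val_injective.image_injective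
    rw [← Set.image_comp]
    exact hXproj
  · exact fun K hKL hKc hKne => exists_cantorSet_proj hN L htop K hKL hKc hKne
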